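/- Let 𝒢 be a simple graph and Γ the contraction of its independence complex Δ_𝒢. Then Γ is itself the independence complex of a simple graph; equivalently, every minimal non-face of Γ has cardinality 2. -/

import Mathlib

open Finset

/-- An abstract simplicial complex on vertex type `V`: a downward closed
family of finite subsets of `V`. -/
structure AbstractComplex (V : Type*) where
  faces : Set (Finset V)
  down_closed : ∀ {s t : Finset V}, s ∈ faces → t ⊆ s → t ∈ faces

namespace AbstractComplex

variable {V : Type*}

/-- A facet is a maximal face. -/
def IsFacet (Δ : AbstractComplex V) (s : Finset V) : Prop :=
  s ∈ Δ.faces ∧ ∀ t ∈ Δ.faces, s ⊆ t → s = t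

/-- A complex is pure if all facets have the same cardinality. -/
def IsPure (Δ : AbstractComplex V) : Prop :=
  ∀ s t : Finset V, Δ.IsFacet s → Δ.IsFacet t → s.card = t.card

/-- The link of a (potential) face `F`. -/
def link [DecidableEq V] (Δ : AbstractComplex V) (F : Finset V) : AbstractComplex V where
  faces := {G | G ∩ F = ∅ ∧ G ∪ F ∈ Δ.faces}
  down_closed := by
    rintro s t ⟨h1, h2⟩ hts
    refine ⟨subset_empty.mp ?_, Δ.down_closed h2 (union_subset_union hts subset_rfl)⟩
    exact h1 ▸ inter_subset_inter hts subset_rfl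

/-- The faces of cardinality `q` (i.e. dimension `q - 1`). -/
abbrev Face (Δ : AbstractComplex V) (q : ℕ) := {s : Finset V // s ∈ Δ.faces ∧ s.card = q}

/-- The simplicial boundary map on reduced chains with coefficients in `K`,
from chains spanned by faces of cardinality `q+1` to those spanned by faces of
cardinality `q`. -/
noncomputable def boundary (K : Type*) [Field K] [LinearOrder V]
    (Δ : AbstractComplex V) (q : ℕ) :
    (Δ.Face (q + 1) →₀ K) →ₗ[K] (Δ.Face q →₀ K) :=
  Finsupp.lsum K fun s => LinearMap.toSpanSingleton K _
    (∑ x ∈ s.1.attach,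
      ((-1 : K) ^ (s.1.filter (fun y => y < x.1)).card) •
        Finsupp.single (⟨s.1.erase x.1,
          Δ.down_closed s.2.1 (erase_subset _ _), by
            rw [card_erase_of_mem x.2, s.2.2]; omega⟩ : Δ.Face q) (1 : K))

/-- `Δ.RHTriv K i` says that the `i`-th reduced simplicial homology of `Δ`
with coefficients in `K` vanishes. -/
def RHTriv (K : Type*) [Field K] [LinearOrder V] (Δ : AbstractComplex V) : ℤ → Prop
  | Int.ofNat i =>
      LinearMap.ker (Δ.boundary K i) ≤ LinearMap.range (Δ.boundary K (i + 1))
  | Int.negSucc 0 => ⊤ ≤ LinearMap.range (Δ.boundary K 0)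
  | Int.negSucc (_ + 1) => True

/-- `Δ.dimLT i` means `i < dim Δ`. -/
def dimLT (Δ : AbstractComplex V) (i : ℤ) : Prop :=
  ∃ s ∈ Δ.faces, i + 2 ≤ (s.card : ℤ)

/-- Cohen–Macaulayness over `K`, via Reisner's criterion. -/
def IsCM (K : Type*) [Field K] [LinearOrder V] (Δ : AbstractComplex V) : Prop :=
  ∀ F ∈ Δ.faces, ∀ i : ℤ, (Δ.link F).dimLT i → (Δ.link F).RHTriv K i

/-- `CM_t`: pure, and the link of every face of cardinality at least `t`
is Cohen–Macaulay. -/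
def IsCMt (K : Type*) [Field K] [LinearOrder V] (t : ℕ) (Δ : AbstractComplex V) : Prop :=
  Δ.IsPure ∧ ∀ F ∈ Δ.faces, t ≤ F.card → IsCM K (Δ.link F)

/-- Buchsbaum-ness: pure and the reduced homology of the link of every nonempty
face vanishes below its dimension. -/
def IsBuchsbaum (K : Type*) [Field K] [LinearOrder V] (Δ : AbstractComplex V) : Prop :=
  Δ.IsPure ∧ ∀ G ∈ Δ.faces, G ≠ ∅ →
    ∀ i : ℤ, (Δ.link G).dimLT i → (Δ.link G).RHTriv K i

end AbstractComplex

/-- The expansion `F^α` of a finite vertex set. -/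
def expandSet {V : Type*} (α : V → ℕ) (F : Finset V) : Finset (Σ i, Fin (α i)) :=
  F.sigma fun _ => Finset.univ

namespace AbstractComplex

/-- The expansion `Δ^α` of a simplicial complex: the complex generated by the
expansions of the facets of `Δ`. -/
def expand {V : Type*} (Δ : AbstractComplex V) (α : V → ℕ) :
    AbstractComplex (Σ i, Fin (α i)) where
  faces := {σ | ∃ F, Δ.IsFacet F ∧ σ ⊆ expandSet α F}
  down_closed := fun ⟨F, hF, hsub⟩ hts => ⟨F, hF, hts.trans hsub⟩

end AbstractComplex

/-- A linear order on the expanded vertex set (lexicographic). -/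
noncomputable instance sigmaFinLinearOrder {V : Type*} [LinearOrder V] {α : V → ℕ} :
    LinearOrder (Σ i, Fin (α i)) :=
  LinearOrder.lift' (toLex : (Σ i, Fin (α i)) → Σₗ i, Fin (α i)) toLex.injective

namespace AbstractComplex

variable {V : Type*}

/-- Two vertices are equivalent iff they lie in exactly the same facets. -/
def contractSetoid (Δ : AbstractComplex V) : Setoid V where
  r x y := ∀ F : Finset V, Δ.IsFacet F → (x ∈ F ↔ y ∈ F)
  iseqv := ⟨fun _ _ _ => Iff.rfl, fun h F hF => (h F hF).symm,
    fun h1 h2 F hF => (h1 F hF).trans (h2 F hF)⟩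

/-- The contraction of `Δ`: the complex on the equivalence classes of vertices,
whose facets are the images of the facets of `Δ`. -/
def contraction (Δ : AbstractComplex V) : AbstractComplex (Quotient Δ.contractSetoid) where
  faces := {σ | ∃ F : Finset V, Δ.IsFacet F ∧
    ∀ y ∈ σ, ∃ x ∈ F, Quotient.mk Δ.contractSetoid x = y}
  down_closed := fun ⟨F, hF, h⟩ hts => ⟨F, hF, fun y hy => h y (hts hy)⟩

/-- The size of an equivalence class of vertices: the components of the vector
obtained from contraction. -/
noncomputable def classSize (Δ : AbstractComplex V) (y : Quotient Δ.contractSetoid) : ℕ :=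
  Nat.card {x : V // Quotient.mk Δ.contractSetoid x = y}

end AbstractComplex

noncomputable instance quotLinearOrder {V : Type*} [LinearOrder V] {s : Setoid V} :
    LinearOrder (Quotient s) :=
  LinearOrder.lift' Quotient.out Quotient.out_injective

/-- The independence complex of a simple graph. -/
def indepComplex {V : Type*} (G : SimpleGraph V) : AbstractComplex V where
  faces := {s | ∀ x ∈ s, ∀ y ∈ s, ¬ G.Adj x y}
  down_closed := fun h hts x hx y hy => h x (hts hx) y (hts hy)

/-! Contracting identifies vertices lying in the same facets, so a set of classes is a face of the
contraction exactly when a set of representatives is a face of `Δ`. For an independence complex,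
choosing representatives pulls `G` back to a graph on the classes, whose independence complex is
therefore the contraction. -/

namespace AbstractComplex

variable {V : Type*} {Δ : AbstractComplex V}

theorem exists_isFacet_superset [Finite V] {s : Finset V} (hs : s ∈ Δ.faces) :
    ∃ F, Δ.IsFacet F ∧ s ⊆ F := by
  obtain ⟨F, hsF, hF⟩ := Finite.exists_le_maximal (p := (· ∈ Δ.faces)) hs
  exact ⟨F, ⟨hF.1, fun t ht hFt => le_antisymm hFt (hF.2 ht hFt)⟩, hsF⟩

theorem IsFacet.mem_of_mk_eq {F : Finset V} (hF : Δ.IsFacet F) {x y : V} (hx : x ∈ F)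
    (hxy : Quotient.mk Δ.contractSetoid x = Quotient.mk Δ.contractSetoid y) : y ∈ F :=
  (Quotient.exact hxy F hF).mp hx

theorem mem_contraction_faces_iff [Finite V] [DecidableEq V]
    {σ : Finset (Quotient Δ.contractSetoid)} :
    σ ∈ Δ.contraction.faces ↔ σ.image Quotient.out ∈ Δ.faces := by
  constructor
  · rintro ⟨F, hF, hσ⟩
    refine Δ.down_closed hF.1 fun v hv => ?_
    obtain ⟨a, ha, rfl⟩ := mem_image.mp hv
    obtain ⟨x, hx, rfl⟩ := hσ a ha
    exact hF.mem_of_mk_eq hx (Quotient.out_eq _).symm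
  · intro hσ
    obtain ⟨F, hF, hsub⟩ := exists_isFacet_superset hσ
    exact ⟨F, hF, fun a ha => ⟨a.out, hsub (mem_image_of_mem _ ha), Quotient.out_eq a⟩⟩

end AbstractComplex

theorem mem_indepComplex_comap_iff {V W : Type*} [DecidableEq V] (G : SimpleGraph V)
    (f : W → V) {s : Finset W} :
    s ∈ (indepComplex (G.comap f)).faces ↔ s.image f ∈ (indepComplex G).faces := by
  simp only [indepComplex, Set.mem_ofPred_eq, forall_mem_image, SimpleGraph.comap_adj]

/-- the contraction of the independence complex of a simple graph is
itself the independence complex of a simple graph. -/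
theorem contraction_indepComplex {V : Type*} [Fintype V] (G : SimpleGraph V) :
    ∃ H : SimpleGraph (Quotient (indepComplex G).contractSetoid),
      ((indepComplex G).contraction).faces = (indepComplex H).faces := by
  classical
  exact ⟨G.comap Quotient.out, Set.ext fun _ =>
    AbstractComplex.mem_contraction_faces_iff.trans (mem_indepComplex_comap_iff G _).symm⟩
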